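/- arXiv:2404.09525 — 2 statements merged into one kernel-verified Lean document; each statement's English description precedes it below -/
import Mathlib

section
/- The Gauss measure with density f_G(x) = (1/ln 2)·1/(1+x) on (0,1) is invariant under the Gauss map T(x) = 1/x - ⌊1/x⌋: for every Borel set A ⊆ (0,1), μ(T^{-1}(A)) = μ(A), where μ(A) = ∫_A f_G. -/
/-!
On each interval `(1/(k+2), 1/(k+1))` the Gauss map is `x ↦ 1/x - (k+1)`, a bijection onto
`(0,1)` with inverse branch `ψₖ y = 1/(y+k+1)` and `|ψₖ'| = ψₖ²`. By change of variables,
`μ(T⁻¹A) = ∑ₖ μ(ψₖ A) = ∫_A ∑ₖ ψₖ(y)² f_G(ψₖ y) dy`, and `f_G` is a fixed point of this transfer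
operator because `ψₖ²/(1+ψₖ) = 1/((y+k+1)(y+k+2)) = ψₖ - ψₖ₊₁` telescopes to `1/(1+y)`.
-/

open MeasureTheory Set Filter
open scoped ENNReal Topology

noncomputable def gaussMap (x : ℝ) : ℝ := 1 / x - ⌊1 / x⌋

noncomputable def gaussBranch (k : ℕ) (y : ℝ) : ℝ := (y + (k + 1))⁻¹

theorem measurable_gaussMap : Measurable gaussMap := by
  unfold gaussMap
  fun_prop

section GaussBranch

variable {k : ℕ} {y : ℝ}

theorem measurableEmbedding_gaussBranch (k : ℕ) : MeasurableEmbedding (gaussBranch k) :=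
  measurableEmbedding_inv.comp (measurableEmbedding_addRight _)

theorem one_div_gaussBranch (k : ℕ) (y : ℝ) : 1 / gaussBranch k y = y + (k + 1) := by
  rw [gaussBranch, one_div, inv_inv]

theorem floor_one_div_gaussBranch (hy : y ∈ Ico 0 1) : ⌊1 / gaussBranch k y⌋ = k + 1 := by
  rw [one_div_gaussBranch, Int.floor_eq_iff]
  push_cast
  constructor <;> linarith [hy.1, hy.2]

theorem gaussMap_gaussBranch (hy : y ∈ Ico 0 1) : gaussMap (gaussBranch k y) = y := by
  rw [gaussMap, floor_one_div_gaussBranch hy, one_div_gaussBranch]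
  push_cast
  ring

theorem gaussBranch_mem_Ioo (hy : y ∈ Ioo 0 1) : gaussBranch k y ∈ Ioo 0 1 := by
  have hk : (0 : ℝ) ≤ k := k.cast_nonneg
  exact ⟨inv_pos.2 (by linarith [hy.1]), inv_lt_one_of_one_lt₀ (by linarith [hy.1])⟩

theorem gaussBranch_gaussMap {x : ℝ} (hx : x ∈ Ioo 0 1) :
    gaussBranch (⌊1 / x⌋₊ - 1) (gaussMap x) = x := by
  have hx1 : 1 ≤ 1 / x := by rw [le_div_iff₀ hx.1]; linarith [hx.2]
  have hfloor : 1 ≤ ⌊1 / x⌋₊ := Nat.le_floor (by exact_mod_cast hx1)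
  rw [gaussBranch, gaussMap, Nat.cast_sub hfloor, ← Int.natCast_floor_eq_floor (by linarith)]
  push_cast
  simp only [sub_add_cancel, one_div, inv_inv]

theorem hasDerivAt_gaussBranch (hy : 0 ≤ y) :
    HasDerivAt (gaussBranch k) (-gaussBranch k y ^ 2) y := by
  have hpos : 0 < y + (k + 1) := by positivity
  exact ((hasDerivAt_id y).add_const ((k : ℝ) + 1)).inv hpos.ne' |>.congr_deriv <| by
    simp [gaussBranch, neg_div, inv_pow]

theorem gaussBranch_sq_div_one_add (hy : 0 ≤ y) :
    gaussBranch k y ^ 2 / (1 + gaussBranch k y) = gaussBranch k y - gaussBranch (k + 1) y := by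
  have hpos : 0 < y + (k + 1) := by positivity
  simp only [gaussBranch]
  push_cast
  field_simp
  ring

end GaussBranch

theorem hasSum_sub_succ_of_antitone {g : ℕ → ℝ} (hg : Antitone g) {l : ℝ}
    (h : Tendsto g atTop (𝓝 l)) : HasSum (fun k => g k - g (k + 1)) (g 0 - l) := by
  rw [hasSum_iff_tendsto_nat_of_nonneg fun k => sub_nonneg.2 (hg k.le_succ)]
  simp_rw [Finset.sum_range_sub']
  exact tendsto_const_nhds.sub h

theorem hasSum_gaussBranch_sq_div_one_add {y : ℝ} (hy : 0 ≤ y) :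
    HasSum (fun k : ℕ => gaussBranch k y ^ 2 / (1 + gaussBranch k y)) (1 / (1 + y)) := by
  have hanti : Antitone fun k : ℕ => gaussBranch k y := fun i j hij => by
    simp only [gaussBranch]
    gcongr
  have htendsto : Tendsto (fun k : ℕ => gaussBranch k y) atTop (𝓝 0) :=
    (tendsto_atTop_add_const_left _ _
      (tendsto_atTop_add_const_right _ _ tendsto_natCast_atTop_atTop)).inv_tendsto_atTop
  simp_rw [gaussBranch_sq_div_one_add hy]
  convert hasSum_sub_succ_of_antitone hanti htendsto using 1
  simp [gaussBranch, add_comm]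

theorem tsum_ofReal_gaussBranch_sq_mul {c y : ℝ} (hc : 0 ≤ c) (hy : 0 ≤ y) :
    ∑' k : ℕ, ENNReal.ofReal (gaussBranch k y ^ 2) *
        ENNReal.ofReal (1 / (c * (1 + gaussBranch k y))) =
      ENNReal.ofReal (1 / (c * (1 + y))) := by
  have hsum := (hasSum_gaussBranch_sq_div_one_add hy).mul_left c⁻¹
  have hnonneg : ∀ k, 0 ≤ gaussBranch k y := fun k => inv_nonneg.2 (by positivity)
  have hterm : ∀ k : ℕ, gaussBranch k y ^ 2 * (1 / (c * (1 + gaussBranch k y))) =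
      c⁻¹ * (gaussBranch k y ^ 2 / (1 + gaussBranch k y)) := fun k => by
    rw [mul_one_div, div_mul_eq_div_div_swap, div_eq_inv_mul]
  simp_rw [← ENNReal.ofReal_mul (sq_nonneg _), hterm]
  rw [← ENNReal.ofReal_tsum_of_nonneg (fun k => by have := hnonneg k; positivity) hsum.summable,
    hsum.tsum_eq, mul_one_div, one_div, mul_inv, div_eq_mul_inv]

section Preimage

variable {A : Set ℝ}

theorem preimage_gaussMap_inter_Ioo (hA : A ⊆ Ioo 0 1) :
    gaussMap ⁻¹' A ∩ Ioo 0 1 = ⋃ k : ℕ, gaussBranch k '' A := by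
  ext x
  simp only [mem_inter_iff, mem_preimage, mem_iUnion, mem_image]
  constructor
  · rintro ⟨hxA, hx⟩
    exact ⟨_, _, hxA, gaussBranch_gaussMap hx⟩
  · rintro ⟨k, y, hyA, rfl⟩
    exact ⟨by rwa [gaussMap_gaussBranch (Ioo_subset_Ico_self (hA hyA))],
      gaussBranch_mem_Ioo (hA hyA)⟩

theorem pairwise_disjoint_image_gaussBranch (hA : A ⊆ Ico 0 1) :
    Pairwise (Function.onFun Disjoint fun k : ℕ => gaussBranch k '' A) := by
  intro i j hij
  refine disjoint_left.2 ?_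
  rintro _ ⟨a, ha, rfl⟩ ⟨b, hb, hab⟩
  have hfloor := floor_one_div_gaussBranch (k := i) (hA ha)
  rw [← hab, floor_one_div_gaussBranch (hA hb)] at hfloor
  exact hij (by exact_mod_cast (add_right_cancel hfloor).symm)

theorem setLIntegral_image_gaussBranch (k : ℕ) (hA : MeasurableSet A) (hA₀ : A ⊆ Ici 0)
    (f : ℝ → ℝ≥0∞) :
    ∫⁻ x in gaussBranch k '' A, f x =
      ∫⁻ y in A, ENNReal.ofReal (gaussBranch k y ^ 2) * f (gaussBranch k y) := by
  rw [lintegral_image_eq_lintegral_abs_deriv_mul hA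
    (fun y hy => (hasDerivAt_gaussBranch (hA₀ hy)).hasDerivWithinAt)
    (measurableEmbedding_gaussBranch k).injective.injOn]
  simp_rw [abs_neg, abs_sq]

theorem setLIntegral_preimage_gaussMap_inter_Ioo (hA : MeasurableSet A) (hA₁ : A ⊆ Ioo 0 1)
    {f : ℝ → ℝ≥0∞} (hf : Measurable f) :
    ∫⁻ x in gaussMap ⁻¹' A ∩ Ioo 0 1, f x =
      ∫⁻ y in A, ∑' k : ℕ, ENNReal.ofReal (gaussBranch k y ^ 2) * f (gaussBranch k y) := by
  have hbranch : ∀ k, Measurable (gaussBranch k) := fun k =>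
    (measurableEmbedding_gaussBranch k).measurable
  rw [preimage_gaussMap_inter_Ioo hA₁,
    lintegral_iUnion (fun k => (measurableEmbedding_gaussBranch k).measurableSet_image.2 hA)
      (pairwise_disjoint_image_gaussBranch (hA₁.trans Ioo_subset_Ico_self)),
    lintegral_tsum fun k => by fun_prop]
  exact tsum_congr fun k =>
    setLIntegral_image_gaussBranch k hA (fun y hy => (hA₁ hy).1.le) f

end Preimage

/-- The Gauss measure, with density f_G(x) = 1/((ln 2)(1+x)) with respect to Lebesgue
measure on (0,1), is invariant under the Gauss map T(x) = 1/x - ⌊1/x⌋. -/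
theorem stmt_9 (T : ℝ → ℝ) (hT : ∀ x : ℝ, T x = 1 / x - ⌊1 / x⌋)
    (μ : Measure ℝ)
    (hμ : μ = (volume.restrict (Set.Ioo (0:ℝ) 1)).withDensity
            (fun x => ENNReal.ofReal (1 / (Real.log 2 * (1 + x))))) :
    ∀ A : Set ℝ, MeasurableSet A → A ⊆ Set.Ioo (0:ℝ) 1 → μ (T ⁻¹' A) = μ A := by
  intro A hA hA₁
  obtain rfl : T = gaussMap := funext hT
  subst hμ
  have hpre : MeasurableSet (gaussMap ⁻¹' A) := measurable_gaussMap hA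
  rw [withDensity_apply _ hpre, withDensity_apply _ hA, Measure.restrict_restrict hpre,
    Measure.restrict_restrict hA, inter_eq_self_of_subset_left hA₁,
    setLIntegral_preimage_gaussMap_inter_Ioo hA hA₁ (by fun_prop)]
  exact setLIntegral_congr_fun hA fun y hy =>
    tsum_ofReal_gaussBranch_sq_mul (Real.log_pos one_lt_two).le (hA₁ hy).1.le
end

section
/- Let β = (1+√5)/2. The function f_inv on (0,1) defined by f_inv(x) = (1+2β)/(2+β) for 0 < x < 1/β and f_inv(x) = (1+β)/(2+β) for 1/β < x < 1 is a probability density, and the associated measure is invariant under the map T(x) = β·x - ⌊β·x⌋ on [0,1). -/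
/-!
Write `γ = φ⁻¹ = φ - 1` and `c₁ = (1 + 2φ)/(2 + φ)`, `c₂ = (1 + φ)/(2 + φ)` for the two values of
the density. On `[0, γ)` the map is `x ↦ φx` and on `[γ, 1)` it is `x ↦ φx - 1`, so the preimage of
`A` is a copy of `A ∩ [0, 1)` together with a copy of `A ∩ [0, γ)`, both scaled by `φ⁻¹`.
Invariance thus reduces to the transfer-operator equations `c₂ = c₁/φ` (one branch over `[γ, 1)`)
and `c₁ = (c₁ + c₂)/φ` (two branches over `[0, γ)`), which both say `c₁ = φ c₂`, i.e. `φ² = φ + 1`.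
-/

open MeasureTheory Set

theorem withDensity_ite_apply (ν : Measure ℝ) {a b c p q : ℝ} (hac : a ≤ c) (hcb : c ≤ b)
    {S : Set ℝ} (hS : MeasurableSet S) :
    (ν.restrict (Ico a b)).withDensity (fun x => ENNReal.ofReal (if x < c then p else q)) S
      = ENNReal.ofReal p * ν (S ∩ Ico a c) + ENNReal.ofReal q * ν (S ∩ Ico c b) := by
  have hdisj : Disjoint (S ∩ Ico a c) (S ∩ Ico c b) :=
    Ico_disjoint_Ico_same.mono inter_subset_right inter_subset_right
  rw [withDensity_apply _ hS, Measure.restrict_restrict hS, ← Ico_union_Ico_eq_Ico hac hcb,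
    inter_union_distrib_left, lintegral_union (hS.inter measurableSet_Ico) hdisj]
  congr 1
  · rw [setLIntegral_congr_fun (g := fun _ => ENNReal.ofReal p) (hS.inter measurableSet_Ico)
      fun x hx => by simp [hx.2.2], setLIntegral_const, mul_comm]
  · rw [setLIntegral_congr_fun (g := fun _ => ENNReal.ofReal q) (hS.inter measurableSet_Ico)
      fun x hx => by simp [not_lt.2 hx.2.1], setLIntegral_const, mul_comm]

theorem measure_inter_Ico_eq_add (ν : Measure ℝ) {a b c : ℝ} (hac : a ≤ c) (hcb : c ≤ b)
    {S : Set ℝ} (hS : MeasurableSet S) :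
    ν (S ∩ Ico a b) = ν (S ∩ Ico a c) + ν (S ∩ Ico c b) := by
  rw [← Ico_union_Ico_eq_Ico hac hcb, inter_union_distrib_left]
  exact measure_union (Ico_disjoint_Ico_same.mono inter_subset_right inter_subset_right)
    (hS.inter measurableSet_Ico)

theorem volume_preimage_mul_sub {β : ℝ} (hβ : 0 < β) (b : ℝ) (B : Set ℝ) :
    volume ((fun x => β * x - b) ⁻¹' B) = ENNReal.ofReal β⁻¹ * volume B := by
  change volume ((β * ·) ⁻¹' ((· + -b) ⁻¹' B)) = _
  rw [Real.volume_preimage_mul_left hβ.ne', abs_of_pos (inv_pos.2 hβ),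
    measure_preimage_add_right]

section BetaTransformation

variable {β : ℝ} (A : Set ℝ)

theorem preimage_fract_mul_inter_Ico_zero_inv (hβ : 0 < β) :
    (fun x => Int.fract (β * x)) ⁻¹' A ∩ Ico 0 β⁻¹ = (β * ·) ⁻¹' (A ∩ Ico 0 1) := by
  ext x
  simp only [mem_inter_iff, mem_preimage, mem_Ico]
  rw [← one_div, lt_div_iff₀ hβ, mul_comm x, ← mul_nonneg_iff_of_pos_left hβ]
  exact and_congr_left fun ⟨h0, h1⟩ => by rw [Int.fract_eq_self.2 ⟨h0, h1⟩]

theorem preimage_fract_mul_inter_Ico_inv_one (hβ : 0 < β) (hβ2 : β ≤ 2) :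
    (fun x => Int.fract (β * x)) ⁻¹' A ∩ Ico β⁻¹ 1 =
      (fun x => β * x - 1) ⁻¹' (A ∩ Ico 0 (β - 1)) := by
  ext x
  simp only [mem_inter_iff, mem_preimage, mem_Ico]
  rw [← one_div, div_le_iff₀ hβ, sub_nonneg, sub_lt_sub_iff_right, mul_comm x,
    ← mul_lt_mul_iff_right₀ hβ, mul_one]
  refine and_congr_left fun ⟨h1, h2⟩ => ?_
  have hfract : Int.fract (β * x) = β * x - 1 :=
    Int.fract_eq_iff.2 ⟨by linarith, by linarith, 1, by push_cast; ring⟩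
  rw [hfract]

end BetaTransformation

namespace Real

open scoped goldenRatio

theorem inv_goldenRatio_eq_sub_one : φ⁻¹ = φ - 1 := by
  rw [inv_goldenRatio, ← one_sub_goldenConj, neg_sub]

noncomputable def goldenParryDensity (x : ℝ) : ℝ :=
  if x < φ⁻¹ then (1 + 2 * φ) / (2 + φ) else (1 + φ) / (2 + φ)

noncomputable def goldenParryMeasure : Measure ℝ :=
  (volume.restrict (Ico 0 1)).withDensity fun x => ENNReal.ofReal (goldenParryDensity x)

theorem inv_goldenRatio_le_one : φ⁻¹ ≤ 1 :=
  inv_le_one_of_one_le₀ one_lt_goldenRatio.le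

theorem goldenParryMeasure_apply {S : Set ℝ} (hS : MeasurableSet S) :
    goldenParryMeasure S = ENNReal.ofReal ((1 + 2 * φ) / (2 + φ)) * volume (S ∩ Ico 0 φ⁻¹)
      + ENNReal.ofReal ((1 + φ) / (2 + φ)) * volume (S ∩ Ico φ⁻¹ 1) :=
  withDensity_ite_apply _ (inv_nonneg.2 goldenRatio_pos.le) inv_goldenRatio_le_one hS

theorem goldenParry_low_mul : (1 + φ) / (2 + φ) * φ = (1 + 2 * φ) / (2 + φ) := by
  rw [div_mul_eq_mul_div]
  congr 1
  linear_combination goldenRatio_sq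

theorem goldenParry_high_mul_inv : (1 + 2 * φ) / (2 + φ) * φ⁻¹ = (1 + φ) / (2 + φ) := by
  rw [← goldenParry_low_mul, mul_inv_cancel_right₀ goldenRatio_ne_zero]

instance : IsProbabilityMeasure goldenParryMeasure := by
  have hpos : 0 < 2 + φ := by linarith [goldenRatio_pos]
  have hmass : (1 + 2 * φ) / (2 + φ) * φ⁻¹ + (1 + φ) / (2 + φ) * (1 - φ⁻¹) = 1 := by
    rw [goldenParry_high_mul_inv, inv_goldenRatio_eq_sub_one, ← mul_one_add, div_mul_eq_mul_div,
      div_eq_one_iff_eq hpos.ne']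
    linear_combination -goldenRatio_sq
  constructor
  rw [goldenParryMeasure_apply MeasurableSet.univ, univ_inter, univ_inter, Real.volume_Ico,
    Real.volume_Ico, sub_zero, ← ENNReal.ofReal_mul (by positivity),
    ← ENNReal.ofReal_mul (by positivity), ← ENNReal.ofReal_add (by positivity)
      (mul_nonneg (by positivity) (sub_nonneg.2 inv_goldenRatio_le_one)), hmass,
    ENNReal.ofReal_one]

theorem goldenParryMeasure_preimage_fract_mul {A : Set ℝ} (hA : MeasurableSet A) :
    goldenParryMeasure ((fun x => Int.fract (φ * x)) ⁻¹' A) = goldenParryMeasure A := by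
  have hm : Measurable fun x => Int.fract (φ * x) := by fun_prop
  rw [goldenParryMeasure_apply (hm hA), goldenParryMeasure_apply hA,
    preimage_fract_mul_inter_Ico_zero_inv A goldenRatio_pos,
    preimage_fract_mul_inter_Ico_inv_one A goldenRatio_pos goldenRatio_lt_two.le,
    Real.volume_preimage_mul_left goldenRatio_ne_zero, abs_of_pos (inv_pos.2 goldenRatio_pos),
    volume_preimage_mul_sub goldenRatio_pos, ← inv_goldenRatio_eq_sub_one,
    measure_inter_Ico_eq_add volume (inv_nonneg.2 goldenRatio_pos.le) inv_goldenRatio_le_one hA]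
  set c₁ := ENNReal.ofReal ((1 + 2 * φ) / (2 + φ))
  set c₂ := ENNReal.ofReal ((1 + φ) / (2 + φ))
  set γ := ENNReal.ofReal φ⁻¹
  set u := volume (A ∩ Ico 0 φ⁻¹)
  set v := volume (A ∩ Ico φ⁻¹ 1)
  have h₁ : c₁ * γ = c₂ := by
    rw [← ENNReal.ofReal_mul (by positivity), goldenParry_high_mul_inv]
  have h₂ : c₂ * γ + c₂ = c₁ := by
    rw [← ENNReal.ofReal_mul (by positivity), ← ENNReal.ofReal_add (by positivity) (by positivity),
      ← mul_add_one, inv_goldenRatio_eq_sub_one, sub_add_cancel, goldenParry_low_mul]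
  calc c₁ * (γ * (u + v)) + c₂ * (γ * u) = c₂ * (u + v) + c₂ * γ * u := by rw [← h₁]; ring
    _ = c₁ * u + c₂ * v := by rw [← h₂]; ring

theorem measurePreserving_fract_goldenRatio_mul :
    MeasurePreserving (fun x => Int.fract (φ * x)) goldenParryMeasure goldenParryMeasure := by
  have hm : Measurable fun x => Int.fract (φ * x) := by fun_prop
  refine ⟨hm, Measure.ext fun A hA => ?_⟩
  rw [Measure.map_apply hm hA, goldenParryMeasure_preimage_fract_mul hA]

end Real

/-- For the golden mean β = (1+√5)/2, the density f_inv (equal to (1+2β)/(2+β) on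
(0,1/β) and (1+β)/(2+β) on (1/β,1)) defines a probability measure on [0,1) which is
invariant under T(x) = βx - ⌊βx⌋. -/
theorem stmt_16 (β : ℝ) (hβ : β = (1 + Real.sqrt 5) / 2)
    (T : ℝ → ℝ) (hT : ∀ x : ℝ, T x = β * x - ⌊β * x⌋)
    (finv : ℝ → ℝ)
    (hfinv : ∀ x : ℝ, finv x =
      if x < 1 / β then (1 + 2 * β) / (2 + β) else (1 + β) / (2 + β))
    (μ : Measure ℝ)
    (hμ : μ = (volume.restrict (Set.Ico (0:ℝ) 1)).withDensity
      (fun x => ENNReal.ofReal (finv x))) :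
    IsProbabilityMeasure μ ∧
    ∀ A : Set ℝ, MeasurableSet A → A ⊆ Set.Ico (0:ℝ) 1 → μ (T ⁻¹' A) = μ A := by
  have hT' : T = fun x => Int.fract (Real.goldenRatio * x) :=
    funext fun x => (hT x).trans (by rw [hβ]; rfl)
  have hμ' : μ = Real.goldenParryMeasure := by
    rw [hμ, Real.goldenParryMeasure]
    congr with x
    rw [hfinv, hβ, one_div]
    rfl
  subst hT' hμ'
  exact ⟨inferInstance, fun A hA _ =>
    Real.measurePreserving_fract_goldenRatio_mul.measure_preimage hA.nullMeasurableSet⟩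
end
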